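/- arXiv:2403.05169 — 3 statements merged into one kernel-verified Lean document; each statement's English description precedes it below -/
import Mathlib

section
/- For integers 0 < p < N, and integers x with 0 ≤ x ≤ min(p-1, N-p) and r with 1 ≤ r ≤ min(p, N-p) and r ≤ p-1, the Hahn polynomials satisfy the recurrence H_r(N,p;x) = (N/p)·( ((p-r)/(N-2r))·H_r(N-1,p-1;x) + ((N-p-r+1)/(N-2r+2))·H_{r-1}(N-1,p-1;x) ). -/
/-- Binomial coefficient with integer lower index, `C(n,m) = 0` for `m < 0`. -/
noncomputable def chz (n : ℕ) (m : ℤ) : ℝ := if 0 ≤ m then (n.choose m.toNat : ℝ) else 0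

/-- Eberlein (dual Hahn) polynomial `E_deg(n,k;x)`. -/
noncomputable def Eberlein (n k deg x : ℕ) : ℝ :=
  ∑ u ∈ Finset.range (deg + 1),
    (-1 : ℝ) ^ u * (x.choose u) * ((k - x).choose (deg - u)) * ((n - k - x).choose (deg - u))

/-- Hahn polynomial `H_i(n,k;x)`. -/
noncomputable def Hahn (n k i x : ℕ) : ℝ :=
  (((n.choose i : ℝ) - chz n ((i : ℤ) - 1)) / ((k.choose x : ℝ) * ((n - k).choose x))) *
    Eberlein n k x i

/-!
Writing `C(n,i) - C(n,i-1) = C(n,i) (n-2i+1)/(n-i+1)` and cancelling the binomial ratios between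
`(N,p)` and `(N-1,p-1)`, the recurrence reduces to a three-term contiguous relation between the
Eberlein sums `E_x(N,p;r)`, `E_x(N-1,p-1;r)` and `E_x(N-1,p-1;r-1)`, with coefficients polynomial
in `x`. That relation is proved by creative telescoping: the termwise combination of the three
sums is the difference `G(u+1) - G(u)` of an explicit certificate vanishing at both ends of the
summation range.
-/

open Finset

namespace Nat

variable {R : Type*}

theorem cast_add_one_mul_choose [Semiring R] (n k : ℕ) :
    ((n : R) + 1) * n.choose k = (n + 1).choose (k + 1) * ((k : R) + 1) := by
  exact_mod_cast congrArg (Nat.cast : ℕ → R) (add_one_mul_choose_eq n k)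

theorem cast_choose_succ_right [CommRing R] (n k : ℕ) :
    (n.choose (k + 1) : R) * ((k : R) + 1) = n.choose k * ((n : R) - k) := by
  rcases le_or_gt k n with h | h
  · rw [← Nat.cast_sub h]
    exact_mod_cast congrArg (Nat.cast : ℕ → R) (choose_succ_right_eq n k)
  · simp [choose_eq_zero_of_lt h, choose_eq_zero_of_lt (h.trans (lt_add_one k))]

theorem cast_choose_mul_add_one [CommRing R] (n k : ℕ) :
    (n.choose k : R) * ((n : R) + 1) = (n + 1).choose k * ((n : R) + 1 - k) := by
  have h := cast_choose_succ_right (R := R) (n + 1) k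
  push_cast at h
  linear_combination cast_add_one_mul_choose (R := R) n k + h

theorem cast_choose_pred_eq [Field R] [CharZero R] {n : ℕ} (hn : n ≠ 0) (k : ℕ) :
    ((n - 1).choose k : R) = n.choose k * ((n : R) - k) / n := by
  obtain ⟨m, rfl⟩ := exists_eq_succ_of_ne_zero hn
  rw [eq_div_iff (by positivity)]
  simpa using cast_choose_mul_add_one (R := R) m k

theorem cast_choose_pred_pred_eq [Field R] [CharZero R] {n k : ℕ} (hn : n ≠ 0) (hk : k ≠ 0) :
    ((n - 1).choose (k - 1) : R) = n.choose k * k / n := by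
  obtain ⟨m, rfl⟩ := exists_eq_succ_of_ne_zero hn
  obtain ⟨j, rfl⟩ := exists_eq_succ_of_ne_zero hk
  rw [eq_div_iff (by positivity)]
  simpa [mul_comm] using cast_add_one_mul_choose (R := R) m j

end Nat

noncomputable def eberleinTerm (r m q x u : ℕ) : ℝ :=
  (-1 : ℝ) ^ u * r.choose u * m.choose (x - u) * q.choose (x - u)

theorem Eberlein_eq_sum_eberleinTerm (n k d x : ℕ) :
    Eberlein n k d x = ∑ u ∈ range (d + 1), eberleinTerm x (k - x) (n - k - x) d u :=
  rfl

/-- For `1 ≤ w ≤ x` this is `(m+1)(q+1) r (-1)^w (w+m-x) C(r-1,w-1) C(m,x-w) C(q,x-w)`; the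
factors `w` and `x+1-w` make it vanish at `w = 0` and `w = x+1` without any truncated
subtraction. -/
noncomputable def contiguityCertificate (r m q x w : ℕ) : ℝ :=
  (-1 : ℝ) ^ w * ((w : ℝ) + m - x) * (w * r.choose w) *
    ((x + 1 - w : ℕ) * (m + 1).choose (x + 1 - w)) * ((x + 1 - w : ℕ) * (q + 1).choose (x + 1 - w))

theorem eberleinTerm_contiguity {r m : ℕ} (hr : 1 ≤ r) (hm : 1 ≤ m) (q : ℕ) {x u : ℕ}
    (hu : u ≤ x) :
    ((m : ℝ) + 1) * ((q : ℝ) + 1) *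
        (((m : ℝ) + q + 1) * ((m : ℝ) + r - x) * eberleinTerm r m q x u
          - (m : ℝ) * ((m : ℝ) + q + r + 1) * eberleinTerm r (m - 1) q x u
          - (r : ℝ) * ((q : ℝ) + 1) * eberleinTerm (r - 1) m (q + 1) x u) =
      contiguityCertificate r m q x (u + 1) - contiguityCertificate r m q x u := by
  obtain ⟨r', rfl⟩ : ∃ r', r = r' + 1 := ⟨r - 1, by omega⟩
  obtain ⟨m', rfl⟩ : ∃ m', m = m' + 1 := ⟨m - 1, by omega⟩
  obtain ⟨v, rfl⟩ : ∃ v, x = u + v := ⟨x - u, by omega⟩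
  simp only [eberleinTerm, contiguityCertificate, Nat.add_sub_cancel, Nat.add_sub_cancel_left,
    show u + v + 1 - u = v + 1 by omega, show u + v + 1 - (u + 1) = v by omega,
    show m' + 1 + 1 = m' + 2 from rfl]
  have h1 := Nat.cast_add_one_mul_choose (R := ℝ) r' u
  have h2 := Nat.cast_add_one_mul_choose (R := ℝ) (m' + 1) v
  have h3 := Nat.cast_add_one_mul_choose (R := ℝ) q v
  have h4 := Nat.cast_choose_succ_right (R := ℝ) (m' + 2) v
  have h5 := Nat.cast_choose_mul_add_one (R := ℝ) m' v
  have h6 := Nat.cast_choose_mul_add_one (R := ℝ) r' u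
  have h7 := Nat.cast_choose_mul_add_one (R := ℝ) q v
  rw [show m' + 1 + 1 = m' + 2 from rfl] at h2
  push_cast at h1 h2 h3 h4 h5 h6 h7 ⊢
  linear_combination
    (-(-1 : ℝ) ^ u * ((m' + 1).choose v : ℝ) * ((m' : ℝ) + 2) * ((q : ℝ) + 1 + v) *
        ((q : ℝ) + 1) * (q.choose v : ℝ)) * h6
    + ((-1 : ℝ) ^ u * ((m' + 1).choose v : ℝ) * ((m' : ℝ) + 2) * ((q : ℝ) + 1 + v) *
        ((r' : ℝ) + 1) * (r'.choose u : ℝ)) * h7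
    - ((-1 : ℝ) ^ u * ((m' : ℝ) + 2) * ((q : ℝ) + 1) * ((m' : ℝ) + q + r' + 3) *
        ((r' + 1).choose u : ℝ) * (q.choose v : ℝ)) * h5
    - ((-1 : ℝ) ^ u * (v : ℝ) ^ 2 * ((q + 1).choose v : ℝ) * ((u : ℝ) + 1) *
        ((r' + 1).choose (u + 1) : ℝ)) * h4
    - ((-1 : ℝ) ^ u * (v : ℝ) ^ 2 * ((q + 1).choose v : ℝ) * ((u : ℝ) + 1) *
        ((r' + 1).choose (u + 1) : ℝ)) * h2
    - ((-1 : ℝ) ^ u * (v : ℝ) ^ 2 * ((m' : ℝ) + 2) * ((m' + 1).choose v : ℝ) *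
        ((q + 1).choose v : ℝ)) * h1
    - ((-1 : ℝ) ^ u * ((m' : ℝ) + 1 - v) * (u : ℝ) * ((v : ℝ) + 1) *
        ((r' + 1).choose u : ℝ) * ((m' + 2).choose (v + 1) : ℝ)) * h3
    - ((-1 : ℝ) ^ u * ((m' : ℝ) + 1 - v) * (u : ℝ) * ((q : ℝ) + 1) *
        ((r' + 1).choose u : ℝ) * (q.choose v : ℝ)) * h2

theorem sum_eberleinTerm_contiguity {r m : ℕ} (hr : 1 ≤ r) (hm : 1 ≤ m) (q x : ℕ) :
    ((m : ℝ) + q + 1) * ((m : ℝ) + r - x) * ∑ u ∈ range (x + 1), eberleinTerm r m q x u =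
      (m : ℝ) * ((m : ℝ) + q + r + 1) * ∑ u ∈ range (x + 1), eberleinTerm r (m - 1) q x u
        + (r : ℝ) * ((q : ℝ) + 1) * ∑ u ∈ range (x + 1), eberleinTerm (r - 1) m (q + 1) x u := by
  have telescope := sum_range_sub (contiguityCertificate r m q x) (x + 1)
  rw [← sum_congr rfl fun u hu => eberleinTerm_contiguity hr hm q (mem_range_succ_iff.mp hu)]
    at telescope
  simp only [← mul_sum, sum_sub_distrib] at telescope
  have boundary : contiguityCertificate r m q x (x + 1) - contiguityCertificate r m q x 0 = 0 := by
    simp [contiguityCertificate]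
  have hne : ((m : ℝ) + 1) * ((q : ℝ) + 1) ≠ 0 := by positivity
  linear_combination (mul_eq_zero.mp (telescope.trans boundary)).resolve_left hne

theorem Eberlein_contiguity {N p r : ℕ} (x : ℕ) (hr : 1 ≤ r) (hrp : r < p) (hrN : r ≤ N - p) :
    ((N : ℝ) - 2 * r + 1) * ((p : ℝ) - x) * Eberlein N p x r =
      ((p : ℝ) - r) * ((N : ℝ) - r + 1) * Eberlein (N - 1) (p - 1) x r
        + (r : ℝ) * ((N : ℝ) - p - r + 1) * Eberlein (N - 1) (p - 1) x (r - 1) := by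
  have h := sum_eberleinTerm_contiguity hr (m := p - r) (by omega) (N - p - r) x
  simp only [Eberlein_eq_sum_eberleinTerm, show p - 1 - r = p - r - 1 by omega,
    show N - 1 - (p - 1) - r = N - p - r by omega, show p - 1 - (r - 1) = p - r by omega,
    show N - 1 - (p - 1) - (r - 1) = N - p - r + 1 by omega]
  rw [Nat.cast_sub hrp.le, Nat.cast_sub hrN, Nat.cast_sub (by omega : p ≤ N)] at h
  linear_combination h

theorem choose_sub_chz_mul (n i : ℕ) :
    ((n.choose i : ℝ) - chz n ((i : ℤ) - 1)) * ((n : ℝ) - i + 1) =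
      n.choose i * ((n : ℝ) - 2 * i + 1) := by
  rcases i with _ | j
  · simp [chz]
  · have hchz : chz n ((j + 1 : ℕ) - 1 : ℤ) = n.choose j := by simp [chz]
    rw [hchz]
    push_cast
    linear_combination Nat.cast_choose_succ_right (R := ℝ) n j

theorem Hahn_eq {n i : ℕ} (k x : ℕ) (hi : i ≤ n) :
    Hahn n k i x = n.choose i * ((n : ℝ) - 2 * i + 1) /
      (((n : ℝ) - i + 1) * (k.choose x * (n - k).choose x)) * Eberlein n k x i := by
  have hne : (n : ℝ) - i + 1 ≠ 0 := by
    have : (i : ℝ) ≤ n := by exact_mod_cast hi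
    linarith
  rw [Hahn, eq_div_of_mul_eq hne (choose_sub_chz_mul n i), div_div]

theorem stmt_7_general (N p x r : ℕ)
    (hx : x ≤ min (p - 1) (N - p)) (hr1 : 1 ≤ r) (hr2 : r ≤ min p (N - p)) (hr3 : r ≤ p - 1) :
    Hahn N p r x = ((N : ℝ) / p) *
      ((((p : ℝ) - r) / ((N : ℝ) - 2 * r)) * Hahn (N - 1) (p - 1) r x
        + (((N : ℝ) - p - r + 1) / ((N : ℝ) - 2 * r + 2)) * Hahn (N - 1) (p - 1) (r - 1) x) := by
  have hrN : r ≤ N - p := le_trans hr2 (min_le_right _ _)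
  have hE := Eberlein_contiguity x hr1 (by omega : r < p) hrN
  rw [Hahn_eq p x (by omega : r ≤ N), Hahn_eq (p - 1) x (by omega : r ≤ N - 1),
    Hahn_eq (p - 1) x (by omega : r - 1 ≤ N - 1), show N - 1 - (p - 1) = N - p by omega,
    Nat.cast_choose_pred_eq (by omega : N ≠ 0), Nat.cast_choose_pred_eq (by omega : p ≠ 0),
    Nat.cast_choose_pred_pred_eq (by omega : N ≠ 0) (by omega : r ≠ 0)]
  push_cast [Nat.cast_sub (by omega : 1 ≤ N), Nat.cast_sub hr1]
  have h2r : (2 * r + 1 : ℝ) ≤ N := by exact_mod_cast (by omega : 2 * r + 1 ≤ N)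
  have hxp : (x + 1 : ℝ) ≤ p := by exact_mod_cast (by omega : x + 1 ≤ p)
  have hP : (p.choose x : ℝ) ≠ 0 := by exact_mod_cast (Nat.choose_pos (by omega)).ne'
  have hQ : ((N - p).choose x : ℝ) ≠ 0 := by exact_mod_cast (Nat.choose_pos (by omega)).ne'
  obtain ⟨h₁, h₂, h₃, h₄, h₅, h₆, h₇⟩ : (N : ℝ) - 2 * r ≠ 0 ∧ (N : ℝ) - 2 * r + 2 ≠ 0 ∧
      (N : ℝ) - r + 1 ≠ 0 ∧ (N : ℝ) - r ≠ 0 ∧ (N : ℝ) ≠ 0 ∧ (p : ℝ) - x ≠ 0 ∧ (p : ℝ) ≠ 0 := by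
    refine ⟨?_, ?_, ?_, ?_, ?_, ?_, ?_⟩ <;> linarith
  rw [show (N : ℝ) - 1 - r + 1 = N - r by ring, show (N : ℝ) - 1 - (r - 1) + 1 = N - r + 1 by ring,
    show (N : ℝ) - 1 - 2 * r + 1 = N - 2 * r by ring,
    show (N : ℝ) - 1 - 2 * (r - 1) + 1 = N - 2 * r + 2 by ring]
  field_simp
  linear_combination (N.choose r : ℝ) * hE

theorem stmt_7 (N p x r : ℕ) (hp : 0 < p) (hpN : p < N)
    (hx : x ≤ min (p - 1) (N - p)) (hr1 : 1 ≤ r) (hr2 : r ≤ min p (N - p)) (hr3 : r ≤ p - 1) :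
    Hahn N p r x = ((N : ℝ) / p) *
      ((((p : ℝ) - r) / ((N : ℝ) - 2 * r)) * Hahn (N - 1) (p - 1) r x
        + (((N : ℝ) - p - r + 1) / ((N : ℝ) - 2 * r + 2)) * Hahn (N - 1) (p - 1) (r - 1) x) :=
  stmt_7_general N p x r hx hr1 hr2 hr3
end

section
/- For q > 1 real, integers 0 < p < N, 0 ≤ x ≤ min(p-1, N-p), and 1 ≤ r ≤ min(p-1, N-p), the q-Hahn polynomials satisfy Q_r(N,p;q;x) = ([N]/[p])·( ([p-r]/[N-2r])·Q_r(N-1,p-1;q;x) + q^{p-r+1}·([N-p-r+1]/[N-2r+2])·Q_{r-1}(N-1,p-1;q;x) ), where [k] = (q^k-1)/(q-1). -/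
noncomputable def qnum (q : ℝ) (k : ℤ) : ℝ := (q ^ k - 1) / (q - 1)

/-- q-binomial coefficient with integer lower index, `0` for negative index. -/
noncomputable def qbin (q : ℝ) (n : ℕ) (r : ℤ) : ℝ :=
  if 0 ≤ r then ∏ i ∈ Finset.range r.toNat, qnum q ((n : ℤ) - i) / qnum q (r - i) else 0

/-- The q-Hahn polynomial `Q_i(n,m;q;j)`. -/
noncomputable def qHahn (q : ℝ) (n m i j : ℕ) : ℝ :=
  ((qbin q n i - qbin q n ((i : ℤ) - 1)) /
      (q ^ (j ^ 2) * qbin q (n - m) j * qbin q m j)) *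
    ∑ u ∈ Finset.range (j + 1),
      (-1 : ℝ) ^ (j - u) * q ^ (u * i + (j - u).choose 2) *
        qbin q (m - u) ((m : ℤ) - j) * qbin q (m - i) u * qbin q (n - m + u - i) u


/-! Write `Q_i(n,m;q;j)` as a coefficient times a sum of summands indexed by `u`; the recurrence
then holds summand by summand. With `N = m + 1`, `p = c + 1`, `r = s + 1`, the absorption identities
`[n-r]·[n choose r] = [n]·[n-1 choose r]` and `[r]·[n choose r] = [n]·[n-1 choose r-1]` turn
every summand into a multiple of the `u`-th summand of `Q_s(m,c;q;x)` and every coefficient into a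
multiple of `[m choose s] / (q^{x²} [m-c choose x] [c choose x])`. What is left is a three-term
identity between q-numbers, the q-analogue of `(m-2s)(a+1) = (a-s)(m-s+1) + (m-a-s)(s+1)` at
`a = c - u`. -/

open Finset

section QNumber

variable {q : ℝ}

lemma qnum_zero (q : ℝ) : qnum q 0 = 0 := by simp [qnum]

lemma qnum_ne_zero (hq : 1 < q) {k : ℤ} (hk : 0 < k) : qnum q k ≠ 0 :=
  (div_pos (by linarith [one_lt_zpow₀ hq hk]) (by linarith)).ne'

lemma qnum_sub_qnum (hq : q ≠ 0) (a b : ℤ) : qnum q a - qnum q b = q ^ b * qnum q (a - b) := by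
  rw [qnum, qnum, qnum, ← mul_div_assoc, mul_sub, ← zpow_add₀ hq, add_sub_cancel]
  ring

lemma qnum_three_term (hq : q ≠ 0) (a m s : ℤ) :
    q ^ (s + 1) * qnum q (m - 2 * s) * qnum q (a + 1) =
      q ^ (s + 1) * qnum q (a - s) * qnum q (m - s + 1) +
        q ^ (a + 1) * qnum q (m - a - s) * qnum q (s + 1) := by
  rw [show m - 2 * s = m - s - s by ring]
  simp only [qnum, zpow_add₀ hq, zpow_sub₀ hq, zpow_one]
  field_simp
  ring

end QNumber

section QBinomial

variable {q : ℝ}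

lemma qbin_of_neg {n : ℕ} {r : ℤ} (hr : r < 0) : qbin q n r = 0 :=
  if_neg hr.not_ge

lemma qbin_natCast (q : ℝ) (n k : ℕ) :
    qbin q n k = (∏ i ∈ range k, qnum q (n - i)) / ∏ i ∈ range k, qnum q (i + 1) := by
  rw [qbin, if_pos (Int.natCast_nonneg k), Int.toNat_natCast, prod_div_distrib,
    ← prod_range_reflect (fun i : ℕ => qnum q (i + 1))]
  congr 1
  refine prod_congr rfl fun i hi => ?_
  rw [mem_range] at hi
  congr 1
  omega

lemma qnum_sub_mul_qbin (q : ℝ) {n : ℕ} (hn : 0 < n) (r : ℤ) :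
    qnum q (n - r) * qbin q n r = qnum q n * qbin q (n - 1) r := by
  obtain ⟨n, rfl⟩ : ∃ k, n = k + 1 := ⟨n - 1, by omega⟩
  rcases lt_or_ge r 0 with hr | hr
  · simp [qbin_of_neg hr]
  lift r to ℕ using hr with k
  have hnum : qnum q ((n + 1 : ℕ) - k) * ∏ i ∈ range k, qnum q ((n + 1 : ℕ) - i)
      = qnum q (n + 1 : ℕ) * ∏ i ∈ range k, qnum q (n - i) := by
    have h := prod_range_succ' (fun i : ℕ => qnum q ((n + 1 : ℕ) - i)) k
    rw [prod_range_succ, mul_comm] at h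
    push_cast at h ⊢
    simpa [add_sub_add_right_eq_sub, mul_comm] using h
  rw [qbin_natCast, qbin_natCast, ← mul_div_assoc, ← mul_div_assoc, hnum, Nat.add_sub_cancel]

lemma qnum_mul_qbin_sub_one (hq : 1 < q) (n : ℕ) (r : ℤ) :
    qnum q r * qbin q n r = qnum q (n - r + 1) * qbin q n (r - 1) := by
  rcases lt_trichotomy r 0 with hr | rfl | hr
  · simp [qbin_of_neg hr, qbin_of_neg (show r - 1 < 0 by omega)]
  · simp [qnum_zero, qbin_of_neg (show (-1 : ℤ) < 0 by omega)]
  lift r to ℕ using hr.le with k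
  obtain ⟨k, rfl⟩ : ∃ j, k = j + 1 := ⟨k - 1, by omega⟩
  have hk : qnum q (k + 1) ≠ 0 := qnum_ne_zero hq (by omega)
  rw [show ((k + 1 : ℕ) : ℤ) - 1 = k by push_cast; ring, qbin_natCast, qbin_natCast,
    prod_range_succ, prod_range_succ]
  push_cast
  field_simp
  ring_nf

lemma qbin_sub_qbin_sub_one (hq : 1 < q) {n : ℕ} {r : ℤ} (hr : r ≤ n) :
    qbin q n r - qbin q n (r - 1) =
      q ^ r * qnum q (n - 2 * r + 1) / qnum q (n - r + 1) * qbin q n r := by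
  have hne : qnum q (n - r + 1) ≠ 0 := qnum_ne_zero hq (by omega)
  have hpred : qbin q n (r - 1) = qnum q r / qnum q (n - r + 1) * qbin q n r := by
    rw [div_mul_eq_mul_div, eq_div_iff hne, mul_comm, ← qnum_mul_qbin_sub_one hq]
  have hdiff := qnum_sub_qnum (q := q) (by positivity) (n - r + 1) r
  rw [show (n : ℤ) - r + 1 - r = n - 2 * r + 1 by ring] at hdiff
  rw [hpred, ← hdiff]
  field_simp

lemma qnum_mul_qbin_pred (hq : 1 < q) {n : ℕ} (hn : 0 < n) (r : ℤ) :
    qnum q r * qbin q n r = qnum q n * qbin q (n - 1) (r - 1) := by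
  rw [qnum_mul_qbin_sub_one hq, ← qnum_sub_mul_qbin q hn]
  ring_nf

end QBinomial

section QHahn

variable {q : ℝ}

noncomputable def qHahnCoeff (q : ℝ) (n m i j : ℕ) : ℝ :=
  (qbin q n i - qbin q n ((i : ℤ) - 1)) / (q ^ (j ^ 2) * qbin q (n - m) j * qbin q m j)

noncomputable def qHahnTerm (q : ℝ) (n m i j u : ℕ) : ℝ :=
  (-1 : ℝ) ^ (j - u) * q ^ (u * i + (j - u).choose 2) *
    qbin q (m - u) ((m : ℤ) - j) * qbin q (m - i) u * qbin q (n - m + u - i) u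

lemma qHahn_eq_sum (q : ℝ) (n m i j : ℕ) :
    qHahn q n m i j = ∑ u ∈ range (j + 1), qHahnCoeff q n m i j * qHahnTerm q n m i j u := by
  rw [qHahn, mul_sum]
  rfl

variable {m c s x u : ℕ}

lemma qnum_mul_qbin_sub_succ (hcsm : c + s < m) :
    qnum q ((m : ℤ) - c - s) * qbin q (m - c + u - s) u
      = qnum q ((m : ℤ) - c + u - s) * qbin q (m - c + u - (s + 1)) u := by
  have h := qnum_sub_mul_qbin q (n := m - c + u - s) (by omega) u
  rwa [show m - c + u - s - 1 = m - c + u - (s + 1) by omega,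
    show ((m - c + u - s : ℕ) : ℤ) = m - c + u - s by omega,
    show (m : ℤ) - c + u - s - u = m - c - s by ring] at h

lemma qHahnTerm_succ_succ_succ (hq : 1 < q) (hux : u ≤ x) (hxc : x ≤ c) (hcsm : c + s < m) :
    qnum q ((c : ℤ) + 1 - x) * qnum q ((m : ℤ) - c + u - s) *
        qHahnTerm q (m + 1) (c + 1) (s + 1) x u
      = q ^ u * qnum q ((c : ℤ) - u + 1) * qnum q ((m : ℤ) - c - s) * qHahnTerm q m c s x u := by
  have hfirst := qnum_mul_qbin_pred hq (q := q) (n := c + 1 - u) (by omega) ((c : ℤ) + 1 - x)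
  rw [show c + 1 - u - 1 = c - u by omega, show ((c + 1 - u : ℕ) : ℤ) = c - u + 1 by omega,
    show (c : ℤ) + 1 - x - 1 = c - x by ring] at hfirst
  have hlast := qnum_mul_qbin_sub_succ (q := q) (u := u) hcsm
  simp only [qHahnTerm, Nat.add_sub_add_right]
  push_cast
  linear_combination
    (-1 : ℝ) ^ (x - u) * q ^ (u * s + (x - u).choose 2) * q ^ u * qbin q (c - s) u *
    (qnum q ((m : ℤ) - c + u - s) * qbin q (m - c + u - (s + 1)) u * hfirst
      - qnum q ((c : ℤ) - u + 1) * qbin q (c - u) ((c : ℤ) - x) * hlast)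

lemma qHahnTerm_succ (hsc : s < c) (hcsm : c + s < m) :
    qnum q ((c : ℤ) - s) * qnum q ((m : ℤ) - c + u - s) * qHahnTerm q m c (s + 1) x u
      = q ^ u * qnum q ((c : ℤ) - u - s) * qnum q ((m : ℤ) - c - s) * qHahnTerm q m c s x u := by
  have hmiddle := qnum_sub_mul_qbin q (n := c - s) (by omega) u
  rw [show c - s - 1 = c - (s + 1) by omega, show ((c - s : ℕ) : ℤ) = c - s by omega,
    show (c : ℤ) - s - u = c - u - s by ring] at hmiddle
  have hlast := qnum_mul_qbin_sub_succ (q := q) (u := u) hcsm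
  simp only [qHahnTerm]
  linear_combination
    -(-1 : ℝ) ^ (x - u) * q ^ (u * s + (x - u).choose 2) * q ^ u * qbin q (c - u) ((c : ℤ) - x) *
    (qnum q ((m : ℤ) - c + u - s) * qbin q (m - c + u - (s + 1)) u * hmiddle
      + qnum q ((c : ℤ) - u - s) * qbin q (c - s) u * hlast)

lemma qHahnCoeff_eq (hq : 1 < q) (hsm : s ≤ m) :
    qHahnCoeff q m c s x =
      q ^ (s : ℤ) * qnum q ((m : ℤ) - 2 * s + 1) / qnum q ((m : ℤ) - s + 1) *
      (qbin q m s / (q ^ (x ^ 2) * qbin q (m - c) x * qbin q c x)) := by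
  rw [qHahnCoeff, qbin_sub_qbin_sub_one hq (by omega)]
  ring

lemma qHahnCoeff_succ_eq (hq : 1 < q) (hsm : s < m) :
    qHahnCoeff q m c (s + 1) x =
      q ^ ((s : ℤ) + 1) * qnum q ((m : ℤ) - 2 * s - 1) / qnum q ((s : ℤ) + 1) *
      (qbin q m s / (q ^ (x ^ 2) * qbin q (m - c) x * qbin q c x)) := by
  have hs : qnum q ((s : ℤ) + 1) ≠ 0 := qnum_ne_zero hq (by omega)
  have hms : qnum q ((m : ℤ) - s) ≠ 0 := qnum_ne_zero hq (by omega)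
  have hbin :
      qbin q m ((s : ℤ) + 1) = qnum q ((m : ℤ) - s) * qbin q m s / qnum q ((s : ℤ) + 1) := by
    rw [eq_div_iff hs, mul_comm, qnum_mul_qbin_sub_one hq, add_sub_cancel_right]
    ring_nf
  rw [qHahnCoeff, qbin_sub_qbin_sub_one hq (by omega)]
  push_cast
  rw [hbin, show (m : ℤ) - 2 * (s + 1) + 1 = m - 2 * s - 1 by ring,
    show (m : ℤ) - (s + 1) + 1 = m - s by ring]
  field_simp

lemma qHahnCoeff_succ_succ_succ_eq (hq : 1 < q) (hsm : s ≤ m) (hxc : x ≤ c) :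
    qHahnCoeff q (m + 1) (c + 1) (s + 1) x =
      q ^ ((s : ℤ) + 1) * qnum q ((m : ℤ) - 2 * s) * qnum q ((m : ℤ) + 1) *
          qnum q ((c : ℤ) + 1 - x) /
        (qnum q ((m : ℤ) - s + 1) * qnum q ((s : ℤ) + 1) * qnum q ((c : ℤ) + 1)) *
      (qbin q m s / (q ^ (x ^ 2) * qbin q (m - c) x * qbin q c x)) := by
  have hs : qnum q ((s : ℤ) + 1) ≠ 0 := qnum_ne_zero hq (by omega)
  have hcx : qnum q ((c : ℤ) + 1 - x) ≠ 0 := qnum_ne_zero hq (by omega)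
  have hms : qnum q ((m : ℤ) - s + 1) ≠ 0 := qnum_ne_zero hq (by omega)
  have hbin : qbin q (m + 1) ((s : ℤ) + 1) =
      qnum q ((m : ℤ) + 1) * qbin q m s / qnum q ((s : ℤ) + 1) := by
    rw [eq_div_iff hs, mul_comm, qnum_mul_qbin_pred hq (by omega), add_sub_cancel_right]
    push_cast
    ring_nf
  have hbin' :
      qbin q (c + 1) x = qnum q ((c : ℤ) + 1) * qbin q c x / qnum q ((c : ℤ) + 1 - x) := by
    rw [eq_div_iff hcx, mul_comm, ← Nat.cast_succ, qnum_sub_mul_qbin q (by omega)]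
    rfl
  rw [qHahnCoeff, qbin_sub_qbin_sub_one hq (by omega), Nat.add_sub_add_right]
  push_cast
  rw [hbin, hbin', show (m : ℤ) + 1 - 2 * (s + 1) + 1 = m - 2 * s by ring,
    show (m : ℤ) + 1 - (s + 1) + 1 = m - s + 1 by ring]
  field_simp

lemma qHahn_summand_recurrence (hq : 1 < q) (hux : u ≤ x) (hxc : x ≤ c) (hsc : s < c)
    (hcsm : c + s < m) :
    qHahnCoeff q (m + 1) (c + 1) (s + 1) x * qHahnTerm q (m + 1) (c + 1) (s + 1) x u =
      qnum q ((m : ℤ) + 1) / qnum q ((c : ℤ) + 1) *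
        (qnum q ((c : ℤ) - s) / qnum q ((m : ℤ) - 2 * s - 1) *
            (qHahnCoeff q m c (s + 1) x * qHahnTerm q m c (s + 1) x u)
          + q ^ ((c : ℤ) - s + 1) * (qnum q ((m : ℤ) - c - s) / qnum q ((m : ℤ) - 2 * s + 1)) *
            (qHahnCoeff q m c s x * qHahnTerm q m c s x u)) := by
  have hq0 : q ≠ 0 := by positivity
  have hcx : qnum q ((c : ℤ) + 1 - x) ≠ 0 := qnum_ne_zero hq (by omega)
  have hcs : qnum q ((c : ℤ) - s) ≠ 0 := qnum_ne_zero hq (by omega)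
  have hmcus : qnum q ((m : ℤ) - c + u - s) ≠ 0 := qnum_ne_zero hq (by omega)
  have hmcs : qnum q ((m : ℤ) - c - s) ≠ 0 := qnum_ne_zero hq (by omega)
  have hc : qnum q ((c : ℤ) + 1) ≠ 0 := qnum_ne_zero hq (by omega)
  have hs : qnum q ((s : ℤ) + 1) ≠ 0 := qnum_ne_zero hq (by omega)
  have hms : qnum q ((m : ℤ) - s + 1) ≠ 0 := qnum_ne_zero hq (by omega)
  have hm1 : qnum q ((m : ℤ) - 2 * s - 1) ≠ 0 := qnum_ne_zero hq (by omega)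
  have hm2 : qnum q ((m : ℤ) - 2 * s + 1) ≠ 0 := qnum_ne_zero hq (by omega)
  set T := qHahnTerm q m c s x u
  have hT1 : qHahnTerm q (m + 1) (c + 1) (s + 1) x u = q ^ u * qnum q ((c : ℤ) - u + 1) *
      qnum q ((m : ℤ) - c - s) * T / (qnum q ((c : ℤ) + 1 - x) * qnum q ((m : ℤ) - c + u - s)) := by
    rw [eq_div_iff (mul_ne_zero hcx hmcus), ← qHahnTerm_succ_succ_succ hq hux hxc hcsm]
    ring
  have hT2 : qHahnTerm q m c (s + 1) x u = q ^ u * qnum q ((c : ℤ) - u - s) *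
      qnum q ((m : ℤ) - c - s) * T / (qnum q ((c : ℤ) - s) * qnum q ((m : ℤ) - c + u - s)) := by
    rw [eq_div_iff (mul_ne_zero hcs hmcus), ← qHahnTerm_succ hsc hcsm]
    ring
  have hcore := qnum_three_term hq0 ((c : ℤ) - u) m s
  rw [show (m : ℤ) - (c - u) - s = m - c + u - s by ring] at hcore
  have hpow : q ^ ((c : ℤ) - s + 1) * q ^ (s : ℤ) = q ^ u * q ^ ((c : ℤ) - u + 1) := by
    rw [← zpow_natCast, ← zpow_add₀ hq0, ← zpow_add₀ hq0]
    ring_nf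
  rw [hT1, hT2, qHahnCoeff_succ_succ_succ_eq hq (by omega) hxc, qHahnCoeff_succ_eq hq (by omega),
    qHahnCoeff_eq hq (by omega)]
  field_simp
  linear_combination qnum q ((m : ℤ) + 1) * qbin q m s * T / (qbin q (m - c) x * qbin q c x) *
    (q ^ u * hcore - qnum q ((s : ℤ) + 1) * qnum q ((m : ℤ) - c + u - s) * hpow)

lemma qHahn_succ (hq : 1 < q) (hxc : x ≤ c) (hsc : s < c) (hcsm : c + s < m) :
    qHahn q (m + 1) (c + 1) (s + 1) x =
      qnum q ((m : ℤ) + 1) / qnum q ((c : ℤ) + 1) *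
        (qnum q ((c : ℤ) - s) / qnum q ((m : ℤ) - 2 * s - 1) * qHahn q m c (s + 1) x
          + q ^ ((c : ℤ) - s + 1) * (qnum q ((m : ℤ) - c - s) / qnum q ((m : ℤ) - 2 * s + 1)) *
            qHahn q m c s x) := by
  rw [qHahn_eq_sum, qHahn_eq_sum, qHahn_eq_sum, mul_sum, mul_sum, ← sum_add_distrib, mul_sum]
  refine sum_congr rfl fun u hu => ?_
  exact qHahn_summand_recurrence hq (Nat.lt_succ_iff.1 (mem_range.1 hu)) hxc hsc hcsm

end QHahn

theorem stmt_9_general (q : ℝ) (hq : 1 < q) (N p x r : ℕ)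
    (hx : x ≤ min (p - 1) (N - p)) (hr1 : 1 ≤ r) (hr2 : r ≤ min (p - 1) (N - p)) :
    qHahn q N p r x = (qnum q N / qnum q p) *
      ((qnum q ((p : ℤ) - r) / qnum q ((N : ℤ) - 2 * r)) * qHahn q (N - 1) (p - 1) r x
        + q ^ ((p : ℤ) - r + 1) *
            (qnum q ((N : ℤ) - p - r + 1) / qnum q ((N : ℤ) - 2 * r + 2)) *
            qHahn q (N - 1) (p - 1) (r - 1) x) := by
  obtain ⟨s, rfl⟩ : ∃ s, r = s + 1 := ⟨r - 1, by omega⟩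
  obtain ⟨c, rfl⟩ : ∃ c, p = c + 1 := ⟨p - 1, by omega⟩
  obtain ⟨m, rfl⟩ : ∃ m, N = m + 1 := ⟨N - 1, by omega⟩
  rw [qHahn_succ hq (by omega) (by omega) (by omega)]
  push_cast
  ring_nf

theorem stmt_9 (q : ℝ) (hq : 1 < q) (N p x r : ℕ) (hp : 0 < p) (hpN : p < N)
    (hx : x ≤ min (p - 1) (N - p)) (hr1 : 1 ≤ r) (hr2 : r ≤ min (p - 1) (N - p)) :
    qHahn q N p r x = (qnum q N / qnum q p) *
      ((qnum q ((p : ℤ) - r) / qnum q ((N : ℤ) - 2 * r)) * qHahn q (N - 1) (p - 1) r x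
        + q ^ ((p : ℤ) - r + 1) *
            (qnum q ((N : ℤ) - p - r + 1) / qnum q ((N : ℤ) - 2 * r + 2)) *
            qHahn q (N - 1) (p - 1) (r - 1) x) :=
  stmt_9_general q hq N p x r hx hr1 hr2
end

section
/- Suppose (H, H̃) is a pair of subspaces of End(V) arising from an A_M multivariate P- and Q-polynomial association scheme via its principal Terwilliger module: V has two bases {v*_α}_{α∈D} and {v_α}_{α∈D} indexed by D = {α ∈ ℕ^M : |α| ≤ N}, with one-dimensional spaces V_α = span(v*_α) and Ṽ_α = span(v_α), such that for each i and each α ∈ D with α+ε_i ∈ D (resp. α−ε_i ∈ D), the matrix A*_{ε_i} ∈ H̃ satisfies A*_{ε_i} v*_α = Σ_β q^β_{ε_i,α} v*_β with q^{α+ε_i}_{ε_i,α} ≠ 0 (resp. q^{α−ε_i}_{ε_i,α} ≠ 0). Then V has no proper nonzero subspace U invariant under both H and H̃ (irreducibility). -/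
/-!
The projections `E_α` lie in the algebra generated by `H`, so `U` is stable under them; applied
to a nonzero `u ∈ U` they show that `U` contains some basis vector `v*_α`. Since the raising and
lowering coefficients of the `A*_{ε_i}` are nonzero, the projections `E_{α ± ε_i}` carry
`A*_{ε_i} v*_α` to a nonzero multiple of `v*_{α ± ε_i}`, so membership of basis vectors in `U`
propagates along the steps `± ε_i`. These steps connect every multi-index of degree at most `N`
to `0`, hence `U` contains the whole basis.
-/

open Module

theorem Pi.exists_eq_add_single_of_ne_zero {ι : Type*} [DecidableEq ι] {α : ι → ℕ} (hα : α ≠ 0) :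
    ∃ i, ∃ β : ι → ℕ, α = β + Pi.single i 1 := by
  obtain ⟨i, hi⟩ := Function.ne_iff.mp hα
  refine ⟨i, α - Pi.single i 1, (tsub_add_cancel_of_le fun j => ?_).symm⟩
  rcases eq_or_ne j i with rfl | hj
  · simpa [Nat.one_le_iff_ne_zero] using hi
  · simp [hj]

abbrev BoundedMultiIndex (ι : Type*) [Fintype ι] (N : ℕ) := {α : ι → ℕ // ∑ j, α j ≤ N}

namespace BoundedMultiIndex

variable {ι : Type*} [Fintype ι] [DecidableEq ι] {N : ℕ}

instance : Zero (BoundedMultiIndex ι N) := ⟨⟨0, by simp⟩⟩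

theorem iff_zero_of_step_iff {P : BoundedMultiIndex ι N → Prop}
    (hP : ∀ (i : ι) (α β : BoundedMultiIndex ι N), β.1 = α.1 + Pi.single i 1 → (P α ↔ P β))
    (α : BoundedMultiIndex ι N) : P α ↔ P 0 := by
  induction hn : ∑ j, α.1 j generalizing α with
  | zero =>
    have : α = 0 := Subtype.ext <| funext fun j => Finset.sum_eq_zero_iff.mp hn j (by simp)
    rw [this]
  | succ n ih =>
    have hα : α.1 ≠ 0 := by rintro h; simp [h] at hn
    obtain ⟨i, β, hβ⟩ := Pi.exists_eq_add_single_of_ne_zero hα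
    have hβn : ∑ j, β j = n := by
      simp only [hβ, Pi.add_apply, Finset.sum_add_distrib, Finset.sum_pi_single', Finset.mem_univ,
        if_true] at hn
      omega
    rw [← hP i ⟨β, by have := α.2; omega⟩ α hβ]
    exact ih _ hβn

theorem forall_of_step_iff {P : BoundedMultiIndex ι N → Prop}
    (hP : ∀ (i : ι) (α β : BoundedMultiIndex ι N), β.1 = α.1 + Pi.single i 1 → (P α ↔ P β))
    {α₀ : BoundedMultiIndex ι N} (h₀ : P α₀) (α : BoundedMultiIndex ι N) : P α :=
  (iff_zero_of_step_iff hP α).2 ((iff_zero_of_step_iff hP α₀).1 h₀)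

end BoundedMultiIndex

section Stabilizer

variable {R M : Type*} [CommSemiring R] [AddCommMonoid M] [Module R M]

def Submodule.endStabilizer (U : Submodule R M) : Subalgebra R (Module.End R M) where
  carrier := {T | ∀ u ∈ U, T u ∈ U}
  mul_mem' hS hT u hu := hS _ (hT u hu)
  add_mem' hS hT u hu := U.add_mem (hS u hu) (hT u hu)
  algebraMap_mem' c _ hu := U.smul_mem c hu

theorem Submodule.apply_mem_of_mem_adjoin {U : Submodule R M} {S : Set (Module.End R M)}
    (hS : ∀ T ∈ S, ∀ u ∈ U, T u ∈ U) {T : Module.End R M} (hT : T ∈ Algebra.adjoin R S)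
    {u : M} (hu : u ∈ U) : T u ∈ U :=
  Algebra.adjoin_le (S := U.endStabilizer) hS hT u hu

end Stabilizer

section BasisProjection

variable {ι K V : Type*} [Field K] [AddCommGroup V] [Module K V]

theorem Module.Basis.mem_of_repr_ne_zero (b : Basis ι K V) {U : Submodule K V} {α : ι}
    (hE : ∀ u ∈ U, (b.coord α).smulRight (b α) u ∈ U) {u : V} (hu : u ∈ U)
    (hα : b.repr u α ≠ 0) : b α ∈ U :=
  (U.smul_mem_iff hα).mp (hE u hu)

theorem Module.Basis.exists_mem_of_ne_bot (b : Basis ι K V) {U : Submodule K V}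
    (hE : ∀ α, ∀ u ∈ U, (b.coord α).smulRight (b α) u ∈ U) (hU : U ≠ ⊥) : ∃ α, b α ∈ U := by
  obtain ⟨u, hu, hu0⟩ := U.exists_mem_ne_zero_of_ne_bot hU
  obtain ⟨α, hα⟩ := DFunLike.ne_iff.mp ((b.repr.map_ne_zero_iff).mpr hu0)
  exact ⟨α, b.mem_of_repr_ne_zero (hE α) hu hα⟩

theorem Module.Basis.eq_top_of_forall_mem (b : Basis ι K V) {U : Submodule K V}
    (h : ∀ α, b α ∈ U) : U = ⊤ := by
  rw [eq_top_iff, ← b.span_eq, Submodule.span_le]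
  rintro _ ⟨α, rfl⟩
  exact h α

end BasisProjection

theorem stmt_18_general (M N : ℕ)
    (V : Type*) [AddCommGroup V] [Module ℂ V]
    (b : Module.Basis {α : Fin M → ℕ // ∑ j, α j ≤ N} ℂ V)
    (H Htil : Submodule ℂ (Module.End ℂ V))
    -- the projection E_α onto span(b α) lies in the algebra generated by H
    (hproj : ∀ α : {α : Fin M → ℕ // ∑ j, α j ≤ N},
      ((b.coord α).smulRight (b α)) ∈ Algebra.adjoin ℂ (H : Set (Module.End ℂ V)))
    -- the operators A*_{ε_i} belong to H̃
    (A : Fin M → Module.End ℂ V) (hA : ∀ i, A i ∈ Htil)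
    -- raising coefficients q^{α+ε_i}_{ε_i,α} = ⟨A*_{ε_i} v*_α⟩_{α+ε_i} are nonzero
    (hraise : ∀ (i : Fin M) (α β : {α : Fin M → ℕ // ∑ j, α j ≤ N}),
      β.1 = α.1 + Pi.single i 1 → b.repr (A i (b α)) β ≠ 0)
    -- lowering coefficients q^{α-ε_i}_{ε_i,α} are nonzero
    (hlower : ∀ (i : Fin M) (α β : {α : Fin M → ℕ // ∑ j, α j ≤ N}),
      α.1 = β.1 + Pi.single i 1 → b.repr (A i (b α)) β ≠ 0) :
    ∀ U : Submodule ℂ V,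
      (∀ T ∈ H, ∀ u ∈ U, T u ∈ U) → (∀ T ∈ Htil, ∀ u ∈ U, T u ∈ U) → U ≠ ⊥ → U = ⊤ := by
  intro U hHU hHtilU hU
  have hE : ∀ α, ∀ u ∈ U, (b.coord α).smulRight (b α) u ∈ U := fun α _ hu =>
    Submodule.apply_mem_of_mem_adjoin hHU (hproj α) hu
  have hAU : ∀ i α, b α ∈ U → A i (b α) ∈ U := fun i _ h => hHtilU _ (hA i) _ h
  obtain ⟨α₀, hα₀⟩ := b.exists_mem_of_ne_bot hE hU
  refine b.eq_top_of_forall_mem (BoundedMultiIndex.forall_of_step_iff ?_ hα₀)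
  intro i α β hβ
  exact ⟨fun h => b.mem_of_repr_ne_zero (hE β) (hAU i α h) (hraise i α β hβ),
    fun h => b.mem_of_repr_ne_zero (hE α) (hAU i β h) (hlower i β α hβ)⟩

theorem stmt_18 (M N : ℕ) (hM : 1 ≤ M)
    (V : Type*) [AddCommGroup V] [Module ℂ V] [FiniteDimensional ℂ V]
    (b : Module.Basis {α : Fin M → ℕ // ∑ j, α j ≤ N} ℂ V)
    (H Htil : Submodule ℂ (Module.End ℂ V))
    -- every element of H is diagonal in the basis {v*_α} = {b α}
    (hHdiag : ∀ T ∈ H, ∀ α : {α : Fin M → ℕ // ∑ j, α j ≤ N}, ∃ c : ℂ, T (b α) = c • b α)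
    -- the projection E_α onto span(b α) lies in the algebra generated by H
    (hproj : ∀ α : {α : Fin M → ℕ // ∑ j, α j ≤ N},
      ((b.coord α).smulRight (b α)) ∈ Algebra.adjoin ℂ (H : Set (Module.End ℂ V)))
    -- the operators A*_{ε_i} belong to H̃
    (A : Fin M → Module.End ℂ V) (hA : ∀ i, A i ∈ Htil)
    -- raising coefficients q^{α+ε_i}_{ε_i,α} = ⟨A*_{ε_i} v*_α⟩_{α+ε_i} are nonzero
    (hraise : ∀ (i : Fin M) (α β : {α : Fin M → ℕ // ∑ j, α j ≤ N}),
      β.1 = α.1 + Pi.single i 1 → b.repr (A i (b α)) β ≠ 0)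
    -- lowering coefficients q^{α-ε_i}_{ε_i,α} are nonzero
    (hlower : ∀ (i : Fin M) (α β : {α : Fin M → ℕ // ∑ j, α j ≤ N}),
      α.1 = β.1 + Pi.single i 1 → b.repr (A i (b α)) β ≠ 0) :
    ∀ U : Submodule ℂ V,
      (∀ T ∈ H, ∀ u ∈ U, T u ∈ U) → (∀ T ∈ Htil, ∀ u ∈ U, T u ∈ U) → U ≠ ⊥ → U = ⊤ :=
  stmt_18_general M N V b H Htil hproj A hA hraise hlower
end
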